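/- arXiv:0901.4376 — 2 statements merged into one kernel-verified Lean document; each statement's English description precedes it below -/
import Mathlib

section
/- Let K be a field and let X1,X2,X3,Y1,Y2,Y3 be homogeneous polynomials of degree 1 in K[x,y,z] (i.e. in MvPolynomial (Fin 3) K) with X1+X2+X3+Y1+Y2+Y3 = 0. Set W = X1+X2+X3, Z1 = X1+Y2+Y3, Z2 = Y1+X2+Y3, Z3 = Y1+Y2+X3 and Q = (X1*Y1+X2*Y2−X3*Y3)^2 − 4*X1*Y1*X2*Y2. Then each of the ten linear forms X1, Y1, X2, Y2, X3, Y3, W, Z1, Z2, Z3 divides the difference of Q and the square of an explicit quadratic form; precisely: X1 and Y1 each divide Q − (X2*Y2−X3*Y3)^2; X2 and Y2 each divide Q − (X1*Y1−X3*Y3)^2; X3 and Y3 each divide Q − (X1*Y1−X2*Y2)^2; W divides Q − (X1*Y2−X2*Y1)^2; Z1 divides Q − (X2*Z2−X3*Z3)^2; Z2 divides Q − (X1*Z1−X3*Z3)^2; and Z3 divides Q − (Y2*W−X3*Z1)^2. (This expresses that X1=0,…,Y3=0,W=0,Z1=0,Z2=0,Z3=0 are all bitangent lines of the plane quartic Q=0: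 the restriction of Q to each of these lines is the square of a quadratic form.) -/
/-!
With `a = X1 Y1`, `b = X2 Y2`, `c = X3 Y3` the quartic is `a² + b² + c² - 2ab - 2bc - 2ca`,
symmetric in `a, b, c`. Subtracting `(b - c)²` leaves `a (a - 2b - 2c)`, which is divisible by
`X1` and `Y1`; the other coordinate lines follow by permuting the pairs `(Xi, Yi)`. Each of the
lines `W, Z1, Z2, Z3` is a sum of one form from each pair `{Xi, Yi}`, so by Riemann's
normalization the complementary sum vanishes on it too; eliminating one form from each of the
two sums turns `Q` into the stated square. Divisibility by the line is read off in the quotient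
ring where its linear form is zero.
-/

universe u

variable {R : Type u} [CommRing R]

theorem dvd_sub_of_forall_map_eq {L a b : R}
    (h : ∀ (S : Type u) [CommRing S] (f : R →+* S), f L = 0 → f a = f b) : L ∣ a - b := by
  have := h _ (Ideal.Quotient.mk (Ideal.span {L})) (Ideal.Quotient.mk_singleton_self L)
  rwa [← sub_eq_zero, ← map_sub, Ideal.Quotient.eq_zero_iff_dvd] at this

def riemannQuartic (x1 x2 x3 y1 y2 y3 : R) : R :=
  (x1 * y1 + x2 * y2 - x3 * y3) ^ 2 - 4 * x1 * y1 * x2 * y2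

section

variable (x1 x2 x3 y1 y2 y3 : R)

@[simp]
theorem map_riemannQuartic {S : Type*} [CommRing S] (f : R →+* S) :
    f (riemannQuartic x1 x2 x3 y1 y2 y3) =
      riemannQuartic (f x1) (f x2) (f x3) (f y1) (f y2) (f y3) := by
  simp [riemannQuartic, map_ofNat]

theorem riemannQuartic_swap₁₂ :
    riemannQuartic x1 x2 x3 y1 y2 y3 = riemannQuartic x2 x1 x3 y2 y1 y3 := by
  unfold riemannQuartic; ring

theorem riemannQuartic_rotate :
    riemannQuartic x1 x2 x3 y1 y2 y3 = riemannQuartic x3 x1 x2 y3 y1 y2 := by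
  unfold riemannQuartic; ring

theorem riemannQuartic_sub_sq :
    riemannQuartic x1 x2 x3 y1 y2 y3 - (x2 * y2 - x3 * y3) ^ 2 =
      x1 * y1 * (x1 * y1 - 2 * x2 * y2 - 2 * x3 * y3) := by
  unfold riemannQuartic; ring

theorem dvd_riemannQuartic_sub_sq :
    x1 ∣ riemannQuartic x1 x2 x3 y1 y2 y3 - (x2 * y2 - x3 * y3) ^ 2 ∧
      y1 ∣ riemannQuartic x1 x2 x3 y1 y2 y3 - (x2 * y2 - x3 * y3) ^ 2 := by
  rw [riemannQuartic_sub_sq, mul_assoc]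
  exact ⟨dvd_mul_right _ _, (dvd_mul_right _ _).mul_left _⟩

end

section OnLine

variable {x1 x2 x3 y1 y2 y3 : R}
  (hsum : x1 + x2 + x3 + y1 + y2 + y3 = 0)
include hsum

theorem riemannQuartic_eq_sq_of_W (hW : x1 + x2 + x3 = 0) :
    riemannQuartic x1 x2 x3 y1 y2 y3 = (x1 * y2 - x2 * y1) ^ 2 := by
  obtain rfl : x3 = -x1 - x2 := by linear_combination hW
  obtain rfl : y3 = -y1 - y2 := by linear_combination hsum
  unfold riemannQuartic; ring

theorem riemannQuartic_eq_sq_of_Z₁ (hZ : x1 + y2 + y3 = 0) :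
    riemannQuartic x1 x2 x3 y1 y2 y3 = (x2 * (y1 + x2 + y3) - x3 * (y1 + y2 + x3)) ^ 2 := by
  obtain rfl : x1 = -y2 - y3 := by linear_combination hZ
  obtain rfl : y1 = -x2 - x3 := by linear_combination hsum
  unfold riemannQuartic; ring

theorem riemannQuartic_eq_sq_of_Z₂ (hZ : y1 + x2 + y3 = 0) :
    riemannQuartic x1 x2 x3 y1 y2 y3 = (x1 * (x1 + y2 + y3) - x3 * (y1 + y2 + x3)) ^ 2 := by
  obtain rfl : x2 = -y1 - y3 := by linear_combination hZ
  obtain rfl : y2 = -x1 - x3 := by linear_combination hsum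
  unfold riemannQuartic; ring

theorem riemannQuartic_eq_sq_of_Z₃ (hZ : y1 + y2 + x3 = 0) :
    riemannQuartic x1 x2 x3 y1 y2 y3 = (y2 * (x1 + x2 + x3) - x3 * (x1 + y2 + y3)) ^ 2 := by
  obtain rfl : x3 = -y1 - y2 := by linear_combination hZ
  obtain rfl : y3 = -x1 - x2 := by linear_combination hsum
  unfold riemannQuartic; ring

theorem W_dvd_riemannQuartic_sub_sq :
    x1 + x2 + x3 ∣ riemannQuartic x1 x2 x3 y1 y2 y3 - (x1 * y2 - x2 * y1) ^ 2 :=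
  dvd_sub_of_forall_map_eq fun _ _ f hL => by
    simpa using riemannQuartic_eq_sq_of_W (by simpa using congrArg f hsum) (by simpa using hL)

theorem Z₁_dvd_riemannQuartic_sub_sq :
    x1 + y2 + y3 ∣ riemannQuartic x1 x2 x3 y1 y2 y3 -
      (x2 * (y1 + x2 + y3) - x3 * (y1 + y2 + x3)) ^ 2 :=
  dvd_sub_of_forall_map_eq fun _ _ f hL => by
    simpa using riemannQuartic_eq_sq_of_Z₁ (by simpa using congrArg f hsum) (by simpa using hL)

theorem Z₂_dvd_riemannQuartic_sub_sq :
    y1 + x2 + y3 ∣ riemannQuartic x1 x2 x3 y1 y2 y3 -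
      (x1 * (x1 + y2 + y3) - x3 * (y1 + y2 + x3)) ^ 2 :=
  dvd_sub_of_forall_map_eq fun _ _ f hL => by
    simpa using riemannQuartic_eq_sq_of_Z₂ (by simpa using congrArg f hsum) (by simpa using hL)

theorem Z₃_dvd_riemannQuartic_sub_sq :
    y1 + y2 + x3 ∣ riemannQuartic x1 x2 x3 y1 y2 y3 -
      (y2 * (x1 + x2 + x3) - x3 * (x1 + y2 + y3)) ^ 2 :=
  dvd_sub_of_forall_map_eq fun _ _ f hL => by
    simpa using riemannQuartic_eq_sq_of_Z₃ (by simpa using congrArg f hsum) (by simpa using hL)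

end OnLine

theorem bitangents_of_riemann_model_general {K : Type*} [Field K]
    (X1 X2 X3 Y1 Y2 Y3 : MvPolynomial (Fin 3) K)
    (hsum : X1 + X2 + X3 + Y1 + Y2 + Y3 = 0)
    (W Z1 Z2 Z3 Q : MvPolynomial (Fin 3) K)
    (hW : W = X1 + X2 + X3)
    (hZ1 : Z1 = X1 + Y2 + Y3)
    (hZ2 : Z2 = Y1 + X2 + Y3)
    (hZ3 : Z3 = Y1 + Y2 + X3)
    (hQ : Q = (X1 * Y1 + X2 * Y2 - X3 * Y3) ^ 2 - 4 * X1 * Y1 * X2 * Y2) :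
    X1 ∣ Q - (X2 * Y2 - X3 * Y3) ^ 2 ∧
    Y1 ∣ Q - (X2 * Y2 - X3 * Y3) ^ 2 ∧
    X2 ∣ Q - (X1 * Y1 - X3 * Y3) ^ 2 ∧
    Y2 ∣ Q - (X1 * Y1 - X3 * Y3) ^ 2 ∧
    X3 ∣ Q - (X1 * Y1 - X2 * Y2) ^ 2 ∧
    Y3 ∣ Q - (X1 * Y1 - X2 * Y2) ^ 2 ∧
    W ∣ Q - (X1 * Y2 - X2 * Y1) ^ 2 ∧
    Z1 ∣ Q - (X2 * Z2 - X3 * Z3) ^ 2 ∧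
    Z2 ∣ Q - (X1 * Z1 - X3 * Z3) ^ 2 ∧
    Z3 ∣ Q - (Y2 * W - X3 * Z1) ^ 2 := by
  change Q = riemannQuartic X1 X2 X3 Y1 Y2 Y3 at hQ
  subst hW hZ1 hZ2 hZ3 hQ
  obtain ⟨hX1, hY1⟩ := dvd_riemannQuartic_sub_sq X1 X2 X3 Y1 Y2 Y3
  have h2 := dvd_riemannQuartic_sub_sq X2 X1 X3 Y2 Y1 Y3
  rw [← riemannQuartic_swap₁₂] at h2
  have h3 := dvd_riemannQuartic_sub_sq X3 X1 X2 Y3 Y1 Y2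
  rw [← riemannQuartic_rotate] at h3
  exact ⟨hX1, hY1, h2.1, h2.2, h3.1, h3.2, W_dvd_riemannQuartic_sub_sq hsum,
    Z₁_dvd_riemannQuartic_sub_sq hsum, Z₂_dvd_riemannQuartic_sub_sq hsum,
    Z₃_dvd_riemannQuartic_sub_sq hsum⟩

/-- The ten lines X1, Y1, X2, Y2, X3, Y3, W, Z1, Z2, Z3 are bitangents of the
Riemann model Q = (X1Y1 + X2Y2 - X3Y3)^2 - 4X1Y1X2Y2: the restriction of Q to
each of these lines is the square of a quadratic form. -/
theorem bitangents_of_riemann_model {K : Type*} [Field K]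
    (X1 X2 X3 Y1 Y2 Y3 : MvPolynomial (Fin 3) K)
    (hX1 : X1.IsHomogeneous 1) (hX2 : X2.IsHomogeneous 1) (hX3 : X3.IsHomogeneous 1)
    (hY1 : Y1.IsHomogeneous 1) (hY2 : Y2.IsHomogeneous 1) (hY3 : Y3.IsHomogeneous 1)
    (hsum : X1 + X2 + X3 + Y1 + Y2 + Y3 = 0)
    (W Z1 Z2 Z3 Q : MvPolynomial (Fin 3) K)
    (hW : W = X1 + X2 + X3)
    (hZ1 : Z1 = X1 + Y2 + Y3)
    (hZ2 : Z2 = Y1 + X2 + Y3)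
    (hZ3 : Z3 = Y1 + Y2 + X3)
    (hQ : Q = (X1 * Y1 + X2 * Y2 - X3 * Y3) ^ 2 - 4 * X1 * Y1 * X2 * Y2) :
    X1 ∣ Q - (X2 * Y2 - X3 * Y3) ^ 2 ∧
    Y1 ∣ Q - (X2 * Y2 - X3 * Y3) ^ 2 ∧
    X2 ∣ Q - (X1 * Y1 - X3 * Y3) ^ 2 ∧
    Y2 ∣ Q - (X1 * Y1 - X3 * Y3) ^ 2 ∧
    X3 ∣ Q - (X1 * Y1 - X2 * Y2) ^ 2 ∧
    Y3 ∣ Q - (X1 * Y1 - X2 * Y2) ^ 2 ∧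
    W ∣ Q - (X1 * Y2 - X2 * Y1) ^ 2 ∧
    Z1 ∣ Q - (X2 * Z2 - X3 * Z3) ^ 2 ∧
    Z2 ∣ Q - (X1 * Z1 - X3 * Z3) ^ 2 ∧
    Z3 ∣ Q - (Y2 * W - X3 * Z1) ^ 2 :=
  bitangents_of_riemann_model_general X1 X2 X3 Y1 Y2 Y3 hsum W Z1 Z2 Z3 Q hW hZ1 hZ2 hZ3 hQ
end

section
/- Let K be a field and let X1,X2,X3,Y1,Y2,Y3 ∈ K^3 be coefficient vectors of linear forms with X1+X2+X3+Y1+Y2+Y3 = 0, det conditions (X1 X2 X3) ≠ 0 and (Y1 Y2 Y3) ≠ 0, and set X7 = X1+X2+X3 and Q(v) = (ℓ_{X1}ℓ_{Y1} + ℓ_{X2}ℓ_{Y2} − ℓ_{X3}ℓ_{Y3})(v)^2 − 4(ℓ_{X1}ℓ_{Y1}ℓ_{X2}ℓ_{Y2})(v). For all nonzero scalars a1,a2,a3,b1,b2,b3,c ∈ K, put x_i = a_i·X_i, y_i = b_i·Y_i (i=1,2,3) and x7 = c·X7 (arbitrary rescalings of the equations of the seven bitangent lines), and set d1 = (x7 x2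 x3)(x7 y2 y3)/((x1 x2 x3)(y1 y2 y3)), d2 = (x1 x7 x3)(y1 x7 y3)/((x1 x2 x3)(y1 y2 y3)), d3 = (x1 x2 x7)(y1 y2 x7)/((x1 x2 x3)(y1 y2 y3)). Then for all v ∈ K^3: (d1·ℓ_{x1}(v)ℓ_{y1}(v) + d2·ℓ_{x2}(v)ℓ_{y2}(v) − d3·ℓ_{x3}(v)ℓ_{y3}(v))^2 − 4·d1·d2·ℓ_{x1}(v)ℓ_{y1}(v)ℓ_{x2}(v)ℓ_{y2}(v) = c^4·Q(v). In particular the quartic produced by the formula of Theorem 4.1 from any choice of defining equations of the seven bitangent lines is proportional to Q. -/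
/-!
In the Riemann normalization `X7 = X1 + X2 + X3 = -(Y1 + Y2 + Y3)`, so by multilinearity and
alternation of the determinant `(X7 X2 X3) = (X1 X2 X3)` and `(X7 Y2 Y3) = -(Y1 Y2 Y3)`, and likewise
for the other two coefficients. After rescaling this gives `dᵢ = -c² / (aᵢ bᵢ)`, i.e.
`dᵢ ℓ_{xᵢ} ℓ_{yᵢ} = -c² ℓ_{Xᵢ} ℓ_{Yᵢ}`, and the quartic is homogeneous of degree two in these three
products.
-/

open Matrix

/-- The determinant of the 3×3 matrix with rows A, B, C. -/
def det3 {K : Type*} [Field K] (A B C : Fin 3 → K) : K :=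
  Matrix.det (Matrix.of ![A, B, C])

section
variable {K : Type*} [Field K]

lemma det3_eq_dotProduct_cross (A B C : Fin 3 → K) : det3 A B C = A ⬝ᵥ B ⨯₃ C :=
  (triple_product_eq_det A B C).symm

lemma det3_rotate (A B C : Fin 3 → K) : det3 A B C = det3 B C A := by
  rw [det3_eq_dotProduct_cross, det3_eq_dotProduct_cross, triple_product_permutation]

lemma det3_smul_smul_smul (a b c : K) (A B C : Fin 3 → K) :
    det3 (a • A) (b • B) (c • C) = a * b * c * det3 A B C := by
  simp only [det3_eq_dotProduct_cross, map_smul, LinearMap.smul_apply, smul_dotProduct,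
    dotProduct_smul, smul_eq_mul]
  ring

lemma det3_add_add_left (A B C : Fin 3 → K) : det3 (A + B + C) B C = det3 A B C := by
  simp only [det3_eq_dotProduct_cross, add_dotProduct, dot_self_cross, dot_cross_self, add_zero]

lemma smul_dotProduct_mul_smul_dotProduct (a b : K) (X Y v : Fin 3 → K) :
    (a • X) ⬝ᵥ v * ((b • Y) ⬝ᵥ v) = a * b * (X ⬝ᵥ v * (Y ⬝ᵥ v)) := by
  rw [smul_dotProduct, smul_dotProduct, smul_eq_mul, smul_eq_mul]
  ring

lemma quartic_form_rescale (d1 d2 d3 P1 P2 P3 Q1 Q2 Q3 c : K)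
    (h1 : d1 * P1 = -c ^ 2 * Q1) (h2 : d2 * P2 = -c ^ 2 * Q2) (h3 : d3 * P3 = -c ^ 2 * Q3) :
    (d1 * P1 + d2 * P2 - d3 * P3) ^ 2 - 4 * d1 * d2 * (P1 * P2)
      = c ^ 4 * ((Q1 + Q2 - Q3) ^ 2 - 4 * (Q1 * Q2)) := by
  rw [show 4 * d1 * d2 * (P1 * P2) = 4 * (d1 * P1) * (d2 * P2) by ring, h1, h2, h3]
  ring

lemma reconstruction_coeff_mul_eq_neg_sq {S A1 A2 A3 B1 B2 B3 : Fin 3 → K}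
    (hSA : S = A1 + A2 + A3) (hSB : S = -(B1 + B2 + B3))
    (hA : det3 A1 A2 A3 ≠ 0) (hB : det3 B1 B2 B3 ≠ 0)
    {a1 a2 a3 b1 b2 b3 : K} (ha1 : a1 ≠ 0) (ha2 : a2 ≠ 0) (ha3 : a3 ≠ 0)
    (hb1 : b1 ≠ 0) (hb2 : b2 ≠ 0) (hb3 : b3 ≠ 0) (c : K) {d : K}
    (hd : d = det3 (c • S) (a2 • A2) (a3 • A3) * det3 (c • S) (b2 • B2) (b3 • B3) /
      (det3 (a1 • A1) (a2 • A2) (a3 • A3) * det3 (b1 • B1) (b2 • B2) (b3 • B3))) :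
    d * (a1 * b1) = -c ^ 2 := by
  have hSA' : det3 (c • S) (a2 • A2) (a3 • A3) = c * a2 * a3 * det3 A1 A2 A3 := by
    rw [det3_smul_smul_smul, hSA, det3_add_add_left]
  have hSB' : det3 (c • S) (b2 • B2) (b3 • B3) = -(c * b2 * b3 * det3 B1 B2 B3) := by
    rw [hSB, smul_neg, ← neg_smul, det3_smul_smul_smul, det3_add_add_left]
    ring
  rw [hd, hSA', hSB', det3_smul_smul_smul, det3_smul_smul_smul]
  field_simp

end

theorem reconstruction_formula_proportional_general {K : Type*} [Field K]
    (X1 X2 X3 Y1 Y2 Y3 : Fin 3 → K)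
    (hsum : X1 + X2 + X3 + Y1 + Y2 + Y3 = 0)
    (hdetX : det3 X1 X2 X3 ≠ 0) (hdetY : det3 Y1 Y2 Y3 ≠ 0)
    (X7 : Fin 3 → K) (hX7 : X7 = X1 + X2 + X3)
    (a1 a2 a3 b1 b2 b3 c : K)
    (ha1 : a1 ≠ 0) (ha2 : a2 ≠ 0) (ha3 : a3 ≠ 0)
    (hb1 : b1 ≠ 0) (hb2 : b2 ≠ 0) (hb3 : b3 ≠ 0)
    (x1 x2 x3 y1 y2 y3 x7 : Fin 3 → K)
    (hx1 : x1 = a1 • X1) (hx2 : x2 = a2 • X2) (hx3 : x3 = a3 • X3)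
    (hy1 : y1 = b1 • Y1) (hy2 : y2 = b2 • Y2) (hy3 : y3 = b3 • Y3)
    (hx7 : x7 = c • X7)
    (d1 d2 d3 : K)
    (hd1 : d1 = det3 x7 x2 x3 * det3 x7 y2 y3 / (det3 x1 x2 x3 * det3 y1 y2 y3))
    (hd2 : d2 = det3 x1 x7 x3 * det3 y1 x7 y3 / (det3 x1 x2 x3 * det3 y1 y2 y3))
    (hd3 : d3 = det3 x1 x2 x7 * det3 y1 y2 x7 / (det3 x1 x2 x3 * det3 y1 y2 y3)) :
    ∀ v : Fin 3 → K,
      (d1 * ((x1 ⬝ᵥ v) * (y1 ⬝ᵥ v)) + d2 * ((x2 ⬝ᵥ v) * (y2 ⬝ᵥ v))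
          - d3 * ((x3 ⬝ᵥ v) * (y3 ⬝ᵥ v))) ^ 2
        - 4 * d1 * d2 * ((x1 ⬝ᵥ v) * (y1 ⬝ᵥ v) * ((x2 ⬝ᵥ v) * (y2 ⬝ᵥ v)))
      = c ^ 4 *
        (((X1 ⬝ᵥ v) * (Y1 ⬝ᵥ v) + (X2 ⬝ᵥ v) * (Y2 ⬝ᵥ v)
            - (X3 ⬝ᵥ v) * (Y3 ⬝ᵥ v)) ^ 2
          - 4 * ((X1 ⬝ᵥ v) * (Y1 ⬝ᵥ v) * ((X2 ⬝ᵥ v) * (Y2 ⬝ᵥ v)))) := by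
  intro v
  subst hx1 hx2 hx3 hy1 hy2 hy3 hx7
  have hX7Y : X7 = -(Y1 + Y2 + Y3) := by
    rw [hX7]; linear_combination hsum
  have h1 : d1 * (a1 * b1) = -c ^ 2 :=
    reconstruction_coeff_mul_eq_neg_sq hX7 hX7Y hdetX hdetY ha1 ha2 ha3 hb1 hb2 hb3 c hd1
  -- The other two coefficients are the first one after a cyclic relabelling of the indices.
  have h2 : d2 * (a2 * b2) = -c ^ 2 := by
    refine reconstruction_coeff_mul_eq_neg_sq (hX7.trans (by abel)) (hX7Y.trans (by abel))
      (det3_rotate X1 X2 X3 ▸ hdetX) (det3_rotate Y1 Y2 Y3 ▸ hdetY) ha2 ha3 ha1 hb2 hb3 hb1 c ?_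
    rw [hd2, det3_rotate (a1 • X1), det3_rotate (b1 • Y1), det3_rotate (a1 • X1),
      det3_rotate (b1 • Y1)]
  have h3 : d3 * (a3 * b3) = -c ^ 2 := by
    refine reconstruction_coeff_mul_eq_neg_sq (hX7.trans (by abel)) (hX7Y.trans (by abel))
      (det3_rotate X3 X1 X2 ▸ hdetX) (det3_rotate Y3 Y1 Y2 ▸ hdetY) ha3 ha1 ha2 hb3 hb1 hb2 c ?_
    rw [hd3, det3_rotate (c • X7), det3_rotate (c • X7), det3_rotate (a3 • X3),
      det3_rotate (b3 • Y3)]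
  apply quartic_form_rescale
  · rw [smul_dotProduct_mul_smul_dotProduct, ← mul_assoc, h1]
  · rw [smul_dotProduct_mul_smul_dotProduct, ← mul_assoc, h2]
  · rw [smul_dotProduct_mul_smul_dotProduct, ← mul_assoc, h3]

/-- Theorem 4.1: the quartic produced by the reconstruction formula from arbitrary
rescalings xᵢ = aᵢ·Xᵢ, yᵢ = bᵢ·Yᵢ, x7 = c·X7 of the seven bitangent lines is
proportional (with factor c⁴) to the original Riemann model Q. -/
theorem reconstruction_formula_proportional {K : Type*} [Field K]
    (X1 X2 X3 Y1 Y2 Y3 : Fin 3 → K)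
    (hsum : X1 + X2 + X3 + Y1 + Y2 + Y3 = 0)
    (hdetX : det3 X1 X2 X3 ≠ 0) (hdetY : det3 Y1 Y2 Y3 ≠ 0)
    (X7 : Fin 3 → K) (hX7 : X7 = X1 + X2 + X3)
    (a1 a2 a3 b1 b2 b3 c : K)
    (ha1 : a1 ≠ 0) (ha2 : a2 ≠ 0) (ha3 : a3 ≠ 0)
    (hb1 : b1 ≠ 0) (hb2 : b2 ≠ 0) (hb3 : b3 ≠ 0) (hc : c ≠ 0)
    (x1 x2 x3 y1 y2 y3 x7 : Fin 3 → K)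
    (hx1 : x1 = a1 • X1) (hx2 : x2 = a2 • X2) (hx3 : x3 = a3 • X3)
    (hy1 : y1 = b1 • Y1) (hy2 : y2 = b2 • Y2) (hy3 : y3 = b3 • Y3)
    (hx7 : x7 = c • X7)
    (d1 d2 d3 : K)
    (hd1 : d1 = det3 x7 x2 x3 * det3 x7 y2 y3 / (det3 x1 x2 x3 * det3 y1 y2 y3))
    (hd2 : d2 = det3 x1 x7 x3 * det3 y1 x7 y3 / (det3 x1 x2 x3 * det3 y1 y2 y3))
    (hd3 : d3 = det3 x1 x2 x7 * det3 y1 y2 x7 / (det3 x1 x2 x3 * det3 y1 y2 y3)) :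
    ∀ v : Fin 3 → K,
      (d1 * ((x1 ⬝ᵥ v) * (y1 ⬝ᵥ v)) + d2 * ((x2 ⬝ᵥ v) * (y2 ⬝ᵥ v))
          - d3 * ((x3 ⬝ᵥ v) * (y3 ⬝ᵥ v))) ^ 2
        - 4 * d1 * d2 * ((x1 ⬝ᵥ v) * (y1 ⬝ᵥ v) * ((x2 ⬝ᵥ v) * (y2 ⬝ᵥ v)))
      = c ^ 4 *
        (((X1 ⬝ᵥ v) * (Y1 ⬝ᵥ v) + (X2 ⬝ᵥ v) * (Y2 ⬝ᵥ v)
            - (X3 ⬝ᵥ v) * (Y3 ⬝ᵥ v)) ^ 2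
          - 4 * ((X1 ⬝ᵥ v) * (Y1 ⬝ᵥ v) * ((X2 ⬝ᵥ v) * (Y2 ⬝ᵥ v)))) :=
  reconstruction_formula_proportional_general X1 X2 X3 Y1 Y2 Y3 hsum hdetX hdetY X7 hX7 a1 a2 a3 b1
    b2 b3 c ha1 ha2 ha3 hb1 hb2 hb3 x1 x2 x3 y1 y2 y3 x7 hx1 hx2 hx3 hy1 hy2 hy3 hx7 d1 d2 d3 hd1
    hd2 hd3
end
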